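/- Let n ≥ 4, β = n/4, L > 0. With G_{β,L} and H_{β,L} as before (G_{β,L}(x) = (β²/(2β−1))x^{2β−1} for x ≤ L, linear beyond L; H_{β,L} its antiderivative), one has x·G_{β,L}(x) − (n/2)·H_{β,L}(x) ≤ 0 for all x ≥ 0. In particular for x > L this expression equals −β²(β−1)L^{2β}(x/L − 1)² ≤ 0. -/

import Mathlib

/-!
On `[0, L]` both `G` and `H` are pure powers, `G = c x^(2β-1)` and `H = c x^(2β) / (2β)`, so
`x G - 2β H` vanishes identically. Beyond `L`, `G` is affine and `H` quadratic, and the expression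
is a quadratic in `x` with a double root at `x = L` and leading coefficient `-β²(β-1) L^(2β-2)`,
which is nonpositive once `β ≥ 1`.
-/

/-- `G_{β,L}(x) = ∫₀ˣ φ'(y)² dy` in closed form: power for `x ≤ L`, linear beyond. -/
noncomputable def Gfun (β L x : ℝ) : ℝ :=
  if x ≤ L then β^2/(2*β-1) * x ^ (2*β-1)
  else β^2 * L ^ (2*(β-1)) * x - 2*β^2 * L ^ (2*β-1) * (β-1)/(2*β-1)

/-- `H_{β,L}(x) = ∫₀ˣ G_{β,L}(y) dy`. -/
noncomputable def Hfun (β L x : ℝ) : ℝ := ∫ y in (0:ℝ)..x, Gfun β L y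

open Real

section

variable {β L : ℝ}

lemma rpow_two_mul_sub_one_eq_div (hL : 0 < L) (β : ℝ) :
    L ^ (2*(β-1)) = L ^ (2*β-1) / L := by
  rw [← rpow_sub_one hL.ne']; ring_nf

lemma rpow_two_mul_eq_mul (hL : 0 < L) (β : ℝ) : L ^ (2*β) = L ^ (2*β-1) * L := by
  rw [← rpow_add_one hL.ne']; ring_nf

lemma Gfun_of_le {x : ℝ} (hx : x ≤ L) : Gfun β L x = β^2/(2*β-1) * x ^ (2*β-1) :=
  if_pos hx

lemma Gfun_of_ge (hβ : 1/2 < β) (hL : 0 < L) {x : ℝ} (hx : L ≤ x) :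
    Gfun β L x = β^2 * L ^ (2*(β-1)) * x - 2*β^2 * L ^ (2*β-1) * (β-1)/(2*β-1) := by
  rcases hx.lt_or_eq with hx | rfl
  · exact if_neg hx.not_ge
  · -- `field_simp` normalises the denominator `2*β-1` to this form before looking for `≠ 0`
    have : β*2 - 1 ≠ 0 := by linarith
    rw [Gfun_of_le le_rfl, rpow_two_mul_sub_one_eq_div hL, mul_assoc, div_mul_cancel₀ _ hL.ne']
    field_simp
    ring

lemma continuous_Gfun (hβ : 1/2 < β) (hL : 0 < L) : Continuous (Gfun β L) := by
  refine Continuous.if_le (continuous_const.mul (continuous_rpow_const (by linarith)))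
    (by fun_prop) continuous_id continuous_const ?_
  rintro x rfl
  rw [← Gfun_of_le le_rfl, Gfun_of_ge hβ hL le_rfl]

lemma Hfun_of_le (hβ : 1/2 < β) {x : ℝ} (hx₀ : 0 ≤ x) (hx : x ≤ L) :
    Hfun β L x = β^2/((2*β-1)*(2*β)) * x ^ (2*β) := by
  have hG : Set.EqOn (Gfun β L) (fun y ↦ β^2/(2*β-1) * y ^ (2*β-1)) (Set.uIcc 0 x) := by
    intro y hy
    rw [Set.uIcc_of_le hx₀] at hy
    exact Gfun_of_le (hy.2.trans hx)
  rw [Hfun, intervalIntegral.integral_congr hG, intervalIntegral.integral_const_mul,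
    integral_rpow (Or.inl (by linarith)), sub_add_cancel, zero_rpow (by linarith), sub_zero]
  field_simp

lemma Hfun_of_ge (hβ : 1/2 < β) (hL : 0 < L) {x : ℝ} (hx : L ≤ x) :
    Hfun β L x = β^2/((2*β-1)*(2*β)) * L ^ (2*β)
      + β^2 * L ^ (2*(β-1)) * ((x^2 - L^2)/2)
      - 2*β^2 * L ^ (2*β-1) * (β-1)/(2*β-1) * (x - L) := by
  have hint (a b : ℝ) : IntervalIntegrable (Gfun β L) MeasureTheory.volume a b :=
    (continuous_Gfun hβ hL).intervalIntegrable a b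
  have hG : Set.EqOn (Gfun β L)
      (fun y ↦ β^2 * L ^ (2*(β-1)) * y - 2*β^2 * L ^ (2*β-1) * (β-1)/(2*β-1))
      (Set.uIcc L x) := by
    intro y hy
    rw [Set.uIcc_of_le hx] at hy
    exact Gfun_of_ge hβ hL hy.1
  rw [Hfun, ← intervalIntegral.integral_add_adjacent_intervals (hint 0 L) (hint L x), ← Hfun,
    Hfun_of_le hβ hL.le le_rfl, intervalIntegral.integral_congr hG,
    intervalIntegral.integral_sub (intervalIntegral.intervalIntegrable_id.const_mul _)
      intervalIntegrable_const,
    intervalIntegral.integral_const_mul, integral_id, intervalIntegral.integral_const, smul_eq_mul]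
  ring

lemma mul_Gfun_sub_Hfun_of_le (hβ : 1/2 < β) {x : ℝ} (hx₀ : 0 ≤ x) (hx : x ≤ L) :
    x * Gfun β L x - 2*β * Hfun β L x = 0 := by
  rw [Gfun_of_le hx, Hfun_of_le hβ hx₀ hx]
  rcases hx₀.lt_or_eq with hx₀ | rfl
  · have : β*2 - 1 ≠ 0 := by linarith
    rw [rpow_two_mul_eq_mul hx₀]
    field_simp
    ring
  · rw [zero_rpow (show 2*β ≠ 0 by linarith)]
    ring

lemma mul_Gfun_sub_Hfun_of_ge (hβ : 1/2 < β) (hL : 0 < L) {x : ℝ} (hx : L ≤ x) :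
    x * Gfun β L x - 2*β * Hfun β L x = -(β^2 * (β-1) * L ^ (2*β) * (x/L - 1)^2) := by
  have : β*2 - 1 ≠ 0 := by linarith
  rw [Gfun_of_ge hβ hL hx, Hfun_of_ge hβ hL hx, rpow_two_mul_sub_one_eq_div hL,
    rpow_two_mul_eq_mul hL]
  field_simp
  ring

end

theorem stmt2 (n : ℕ) (hn : 4 ≤ n) (β L : ℝ) (hβ : β = (n:ℝ)/4) (hL : 0 < L) :
    (∀ x : ℝ, 0 ≤ x → x * Gfun β L x - (n/2 : ℝ) * Hfun β L x ≤ 0) ∧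
    (∀ x : ℝ, L < x →
      x * Gfun β L x - (n/2 : ℝ) * Hfun β L x
        = -(β^2 * (β-1) * L ^ (2*β) * (x/L - 1)^2)) := by
  have hβ₁ : 1 ≤ β := by
    rw [hβ, le_div_iff₀ (by norm_num)]
    exact_mod_cast hn
  have hn₂ : (n/2 : ℝ) = 2*β := by rw [hβ]; ring
  rw [hn₂]
  refine ⟨fun x hx₀ ↦ ?_, fun x hx ↦ mul_Gfun_sub_Hfun_of_ge (by linarith) hL hx.le⟩
  rcases le_or_gt x L with hx | hx
  · exact (mul_Gfun_sub_Hfun_of_le (by linarith) hx₀ hx).le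
  · rw [mul_Gfun_sub_Hfun_of_ge (by linarith) hL hx.le, neg_nonpos]
    have := rpow_pos_of_pos hL (2*β)
    have : 0 ≤ β - 1 := by linarith
    positivity
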